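/- arXiv:1808.10410 — 9 statements merged into one kernel-verified Lean document; each statement's English description precedes it below -/
import Mathlib

section
/- For b > 0, q ∈ [l,u], and z ≥ 0 with q + z ≤ u, the partial derivative with respect to z of (C_{q+z}/C_q)·exp(z/b) is nonnegative; i.e., the function z ↦ (C_{q+z}/C_q)·exp(z/b) is monotonically nondecreasing on {z ≥ 0 : q+z ≤ u}. -/
open Real

/-- Normalisation constant of the bounded Laplace mechanism on `[l,u]`. -/
noncomputable def C (l u b q : ℝ) : ℝ :=
  1 - (1 / 2) * (Real.exp (-(q - l) / b) + Real.exp (-(u - q) / b))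

lemma C_pos (l u b q : ℝ) (hlu : l < u) (hb : 0 < b) (hq : q ∈ Set.Icc l u) :
    0 < C l u b q := by
  obtain ⟨h1, h2⟩ := hq
  unfold C
  have e1 : Real.exp (-(q - l) / b) ≤ 1 := by
    rw [Real.exp_le_one_iff]
    apply div_nonpos_of_nonpos_of_nonneg <;> linarith
  have e2 : Real.exp (-(u - q) / b) ≤ 1 := by
    rw [Real.exp_le_one_iff]
    apply div_nonpos_of_nonpos_of_nonneg <;> linarith
  rcases lt_or_eq_of_le h1 with h | h
  · have : Real.exp (-(q - l) / b) < 1 := by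
      rw [Real.exp_lt_one_iff]
      apply div_neg_of_neg_of_pos <;> linarith
    nlinarith
  · have : Real.exp (-(u - q) / b) < 1 := by
      rw [Real.exp_lt_one_iff]
      apply div_neg_of_neg_of_pos <;> linarith
    nlinarith

lemma aux_mono (b d : ℝ) (hb : 0 < b) (hd : 0 ≤ d) :
    MonotoneOn (fun z => Real.exp (z / b) - (1/2) * Real.exp ((2*z - d) / b))
      (Set.Icc 0 d) := by
  have hderiv : ∀ z : ℝ, HasDerivAt
      (fun z => Real.exp (z / b) - (1/2) * Real.exp ((2*z - d) / b))
      (Real.exp (z / b) * (1/b) - (1/2) * (Real.exp ((2*z - d) / b) * (2/b))) z := by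
    intro z
    have h1 : HasDerivAt (fun z : ℝ => Real.exp (z / b)) (Real.exp (z / b) * (1/b)) z := by
      have := (((hasDerivAt_id z).div_const b)).exp
      simpa using this
    have h2 : HasDerivAt (fun z : ℝ => Real.exp ((2*z - d) / b))
        (Real.exp ((2*z - d) / b) * (2/b)) z := by
      have := ((((hasDerivAt_id z).const_mul 2).sub_const d).div_const b).exp
      simpa [mul_comm, mul_div_assoc] using this
    exact h1.sub (h2.const_mul (1/2))
  apply monotoneOn_of_deriv_nonneg (convex_Icc 0 d)
  · exact Continuous.continuousOn (by continuity)
  · intro x hx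
    exact (hderiv x).differentiableAt.differentiableWithinAt
  · intro x hx
    rw [interior_Icc] at hx
    rw [(hderiv x).deriv]
    have hle : (2*x - d) / b ≤ x / b := by
      gcongr <;> linarith [hx.2, hb]
    have h2 := Real.exp_le_exp.mpr hle
    have heq : (1:ℝ)/2 * (Real.exp ((2*x - d)/b) * (2/b)) = Real.exp ((2*x - d)/b) * (1/b) := by
      field_simp
    rw [heq]
    have hbpos : (0:ℝ) ≤ 1/b := by positivity
    nlinarith

theorem mono_in_z (l u b q : ℝ) (hlu : l < u) (hb : 0 < b)
    (hq : q ∈ Set.Icc l u) :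
    MonotoneOn (fun z => (C l u b (q + z) / C l u b q) * Real.exp (z / b))
      {z : ℝ | 0 ≤ z ∧ q + z ≤ u} := by
  have hCq := C_pos l u b q hlu hb hq
  have hseteq : {z : ℝ | 0 ≤ z ∧ q + z ≤ u} = Set.Icc 0 (u - q) := by
    ext z; simp only [Set.mem_setOf_eq, Set.mem_Icc]; constructor <;> intro h <;>
      constructor <;> linarith [h.1, h.2]
  rw [hseteq]
  have key : ∀ z : ℝ, (C l u b (q + z) / C l u b q) * Real.exp (z / b)
      = (1 / C l u b q) *
        ((Real.exp (z / b) - (1/2) * Real.exp ((2*z - (u - q)) / b))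
          - (1/2) * Real.exp (-(q - l) / b)) := by
    intro z
    have e1 : Real.exp (-(q + z - l) / b) * Real.exp (z / b) = Real.exp (-(q - l) / b) := by
      rw [← Real.exp_add]; congr 1; field_simp; ring
    have e2 : Real.exp (-(u - (q + z)) / b) * Real.exp (z / b)
        = Real.exp ((2*z - (u - q)) / b) := by
      rw [← Real.exp_add]; congr 1; field_simp; ring
    have hnum : C l u b (q + z) * Real.exp (z / b)
        = (Real.exp (z / b) - (1/2) * Real.exp ((2*z - (u - q)) / b))
          - (1/2) * Real.exp (-(q - l) / b) := by
      unfold C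
      linear_combination (-(1/2:ℝ)) * e1 + (-(1/2:ℝ)) * e2
    rw [div_mul_eq_mul_div, hnum]; ring
  have hmono := aux_mono b (u - q) hb (by linarith [hq.2])
  have : MonotoneOn (fun z =>
      (1 / C l u b q) *
        ((Real.exp (z / b) - (1/2) * Real.exp ((2*z - (u - q)) / b))
          - (1/2) * Real.exp (-(q - l) / b))) (Set.Icc 0 (u - q)) := by
    intro x hx y hy hxy
    have := hmono hx hy hxy
    have hc : 0 ≤ 1 / C l u b q := by positivity
    dsimp only
    apply mul_le_mul_of_nonneg_left _ hc
    linarith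
  intro x hx y hy hxy
  simpa only [key] using this hx hy hxy
end

section
/- The maximum of (C_{q'}/C_q)·exp(|q'−q|/b) over all q, q' ∈ [l,u] with |q'−q| ≤ ΔQ is attained at q = l, q' = l + ΔQ; that is, for all such q, q', (C_{q'}/C_q)·exp(|q'−q|/b) ≤ (C_{l+ΔQ}/C_l)·exp(ΔQ/b). -/
/-!
In the coordinates `E = exp (-(u - l) / b)`, `x = exp (-(q - l) / b)`, `y = exp (-(q' - q) / b)`
one has `C l u b q = Cexp E x = 1 - (x + E / x) / 2`, and for `q ≤ q'` the quantity to bound is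
`Cexp E (x * y) / (Cexp E x * y)`. Two polynomial identities show that
`Cexp E (x * y) * Cexp E 1 ≤ Cexp E y * Cexp E x` (moving `q` down to `l` increases the ratio)
and that `Cexp E y / y` is antitone on `[E, ∞)` (the ratio grows with the gap `q' - q`).
The case `q' < q` reduces to `q < q'` by the reflection `q ↦ l + u - q`, which preserves `C`.
-/

open Real

noncomputable def Cexp (E x : ℝ) : ℝ := 1 - (x + E / x) / 2

section Cexp

variable {E x y z : ℝ}

lemma Cexp_one_le (hx : 0 < x) (hEx : E ≤ x) (hx1 : x ≤ 1) : Cexp E 1 ≤ Cexp E x := by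
  have : x + E / x ≤ 1 + E := by
    rw [← sub_nonneg, show 1 + E - (x + E / x) = (1 - x) * (x - E) / x by field_simp; ring]
    exact div_nonneg (mul_nonneg (by linarith) (by linarith)) hx.le
  unfold Cexp; linarith

lemma Cexp_mul_mul_Cexp_one_le (hE : 0 ≤ E) (hx : 0 < x) (hx1 : x ≤ 1) (hy : 0 < y)
    (hy1 : y ≤ 1) (hExy : E ≤ x * y) :
    Cexp E (x * y) * Cexp E 1 ≤ Cexp E y * Cexp E x := by
  have hEx : E ≤ x := hExy.trans (mul_le_of_le_one_right hx.le hy1)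
  have hfac : 0 ≤ E * (1 - x) + y * (2 * x - E * (1 + x)) := by
    have : 0 ≤ 2 * x - E * (1 + x) := by nlinarith
    have : 0 ≤ E * (1 - x) := mul_nonneg hE (by linarith)
    positivity
  rw [← sub_nonneg, show Cexp E y * Cexp E x - Cexp E (x * y) * Cexp E 1
      = (1 - y) * (1 - x) * (E * (1 - x) + y * (2 * x - E * (1 + x))) / (4 * x * y) by
    unfold Cexp; field_simp; ring]
  exact div_nonneg (mul_nonneg (mul_nonneg (by linarith) (by linarith)) hfac) (by positivity)

lemma antitoneOn_Cexp_div (hE : 0 < E) : AntitoneOn (fun y ↦ Cexp E y / y) (Set.Ici E) := by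
  intro z hz y hy hzy
  simp only [Set.mem_Ici] at hz hy
  have hz0 : 0 < z := hE.trans_le hz
  have hy0 : 0 < y := hz0.trans_le hzy
  rw [← sub_nonneg, show Cexp E z / z - Cexp E y / y
      = (y - z) * (2 * y * z - E * (y + z)) / (2 * y ^ 2 * z ^ 2) by
    unfold Cexp; field_simp; ring]
  have : 0 ≤ 2 * y * z - E * (y + z) := by nlinarith
  exact div_nonneg (mul_nonneg (by linarith) this) (by positivity)

lemma Cexp_ratio_le (hE : 0 < E) (hE1 : E < 1) (hx : 0 < x) (hx1 : x ≤ 1) (hEz : E ≤ z)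
    (hzy : z ≤ y) (hy1 : y ≤ 1) (hExy : E ≤ x * y) :
    Cexp E (x * y) / Cexp E x * y⁻¹ ≤ Cexp E z / Cexp E 1 * z⁻¹ := by
  have hy : 0 < y := hE.trans_le (hEz.trans hzy)
  have h1 : 0 < Cexp E 1 := by unfold Cexp; linarith
  have hxpos : 0 < Cexp E x := h1.trans_le (Cexp_one_le hx (hExy.trans (mul_le_of_le_one_right hx.le hy1)) hx1)
  calc Cexp E (x * y) / Cexp E x * y⁻¹ ≤ Cexp E y / Cexp E 1 * y⁻¹ := by
        refine mul_le_mul_of_nonneg_right ?_ (inv_nonneg.2 hy.le)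
        rw [div_le_div_iff₀ hxpos h1]
        exact Cexp_mul_mul_Cexp_one_le hE.le hx hx1 hy hy1 hExy
    _ = (Cexp E y / y) / Cexp E 1 := by ring
    _ ≤ (Cexp E z / z) / Cexp E 1 := by
        refine div_le_div_of_nonneg_right ?_ h1.le
        exact antitoneOn_Cexp_div hE (Set.mem_Ici.2 hEz) (Set.mem_Ici.2 (hEz.trans hzy)) hzy
    _ = Cexp E z / Cexp E 1 * z⁻¹ := by ring

end Cexp

lemma C_eq_Cexp {l u b : ℝ} (q : ℝ) (hb : b ≠ 0) :
    C l u b q = Cexp (exp (-(u - l) / b)) (exp (-(q - l) / b)) := by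
  rw [C, Cexp, ← exp_sub, show -(u - l) / b - -(q - l) / b = -(u - q) / b by field_simp; ring]
  ring

lemma C_reflect (l u b q : ℝ) : C l u b (l + u - q) = C l u b q := by
  rw [C, C, show -(l + u - q - l) / b = -(u - q) / b by ring,
    show -(u - (l + u - q)) / b = -(q - l) / b by ring, add_comm]

lemma C_ratio_le_of_le {l u b ΔQ q q' : ℝ} (hlu : l < u) (hb : 0 < b) (hΔQu : ΔQ ≤ u - l)
    (hq : l ≤ q) (hqq' : q ≤ q') (hq'u : q' ≤ u) (hd : q' - q ≤ ΔQ) :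
    (C l u b q' / C l u b q) * exp ((q' - q) / b)
      ≤ (C l u b (l + ΔQ) / C l u b l) * exp (ΔQ / b) := by
  set φ : ℝ → ℝ := fun t ↦ exp (-t / b) with hφ_def
  have hφ : StrictAnti φ := fun s t hst ↦ exp_lt_exp.2 (by gcongr)
  have hφ_inv (t : ℝ) : exp (t / b) = (φ t)⁻¹ := by
    rw [hφ_def, ← exp_neg, neg_div, neg_neg]
  have hC (q : ℝ) : C l u b q = Cexp (φ (u - l)) (φ (q - l)) := C_eq_Cexp q hb.ne'
  have hφ_add : φ (q' - l) = φ (q - l) * φ (q' - q) := by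
    simp only [hφ_def, ← exp_add]; congr 1; ring
  have hφ_zero : φ 0 = 1 := by simp [hφ_def]
  rw [hC, hC, hC, hC, hφ_add, hφ_inv, hφ_inv, sub_self, hφ_zero, add_sub_cancel_left]
  refine Cexp_ratio_le (exp_pos _) ?_ (exp_pos _) ?_ ?_ ?_ ?_ ?_
  · exact hφ_zero ▸ hφ (by linarith)
  · exact hφ_zero ▸ hφ.antitone (by linarith)
  · exact hφ.antitone hΔQu
  · exact hφ.antitone hd
  · exact hφ_zero ▸ hφ.antitone (by linarith)
  · exact hφ_add ▸ hφ.antitone (by linarith)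

theorem max_ratio_general (l u b ΔQ : ℝ) (hlu : l < u) (hb : 0 < b)
    (hΔQu : ΔQ ≤ u - l)
    (q q' : ℝ) (hq : q ∈ Set.Icc l u) (hq' : q' ∈ Set.Icc l u)
    (hd : |q' - q| ≤ ΔQ) :
    (C l u b q' / C l u b q) * Real.exp (|q' - q| / b)
      ≤ (C l u b (l + ΔQ) / C l u b l) * Real.exp (ΔQ / b) := by
  obtain ⟨hql, hqu⟩ := hq
  obtain ⟨hq'l, hq'u⟩ := hq'
  rcases le_total q q' with h | h
  · rw [abs_of_nonneg (sub_nonneg.2 h)] at hd ⊢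
    exact C_ratio_le_of_le hlu hb hΔQu hql h hq'u hd
  · rw [abs_of_nonpos (sub_nonpos.2 h), neg_sub] at hd ⊢
    rw [← C_reflect l u b q', ← C_reflect l u b q,
      show q - q' = (l + u - q') - (l + u - q) by ring]
    exact C_ratio_le_of_le hlu hb hΔQu (by linarith) (by linarith) (by linarith) (by linarith)

theorem max_ratio (l u b ΔQ : ℝ) (hlu : l < u) (hb : 0 < b)
    (hΔQ : 0 < ΔQ) (hΔQu : ΔQ ≤ u - l)
    (q q' : ℝ) (hq : q ∈ Set.Icc l u) (hq' : q' ∈ Set.Icc l u)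
    (hd : |q' - q| ≤ ΔQ) :
    (C l u b q' / C l u b q) * Real.exp (|q' - q| / b)
      ≤ (C l u b (l + ΔQ) / C l u b l) * Real.exp (ΔQ / b) :=
  max_ratio_general l u b ΔQ hlu hb hΔQu q q' hq hq' hd
end

section
/- ΔC(b) ≥ 1 for all b > 0, with equality if and only if ΔQ = u − l. -/
open Real

theorem deltaC_ge_one (l u b ΔQ : ℝ) (hlu : l < u) (hb : 0 < b)
    (hΔQ : 0 < ΔQ) (hΔQu : ΔQ ≤ u - l) :
    1 ≤ C l u b (l + ΔQ) / C l u b l ∧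
      (C l u b (l + ΔQ) / C l u b l = 1 ↔ ΔQ = u - l) := by
  have hb' : b ≠ 0 := ne_of_gt hb
  have hsum : Real.exp (-(u - l) / b)
      = Real.exp (-ΔQ / b) * Real.exp (-(u - l - ΔQ) / b) := by
    rw [← Real.exp_add]
    congr 1
    field_simp
    ring
  have key : C l u b (l + ΔQ) - C l u b l
      = (1 / 2) * (1 - Real.exp (-ΔQ / b)) * (1 - Real.exp (-(u - l - ΔQ) / b)) := by
    unfold C
    have a1 : -(l + ΔQ - l) / b = -ΔQ / b := by ring
    have a2 : -(u - (l + ΔQ)) / b = -(u - l - ΔQ) / b := by ring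
    have a3 : -(l - l) / b = (0 : ℝ) := by ring
    rw [a1, a2, a3, Real.exp_zero, hsum]
    ring
  have h1 : Real.exp (-ΔQ / b) < 1 := by
    rw [Real.exp_lt_one_iff]
    exact div_neg_of_neg_of_pos (by linarith) hb
  have h2 : Real.exp (-(u - l - ΔQ) / b) ≤ 1 := by
    rw [Real.exp_le_one_iff]
    apply div_nonpos_of_nonpos_of_nonneg <;> linarith
  have hClpos : 0 < C l u b l := by
    have hs : Real.exp (-(u - l) / b) < 1 := by
      rw [Real.exp_lt_one_iff]
      exact div_neg_of_neg_of_pos (by linarith) hb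
    unfold C
    have a3 : -(l - l) / b = (0 : ℝ) := by ring
    rw [a3, Real.exp_zero]
    linarith
  have hge : C l u b l ≤ C l u b (l + ΔQ) := by nlinarith
  constructor
  · exact (one_le_div hClpos).mpr hge
  · rw [div_eq_one_iff_eq (ne_of_gt hClpos)]
    constructor
    · intro h
      have h0 : (1 / 2 : ℝ) * (1 - Real.exp (-ΔQ / b)) * (1 - Real.exp (-(u - l - ΔQ) / b)) = 0 := by
        rw [← key, h]; ring
      have h3 : (1 : ℝ) - Real.exp (-(u - l - ΔQ) / b) = 0 := by
        rcases mul_eq_zero.mp h0 with h' | h'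
        · rcases mul_eq_zero.mp h' with h'' | h''
          · norm_num at h''
          · linarith
        · exact h'
      have : Real.exp (-(u - l - ΔQ) / b) = 1 := by linarith
      have harg : -(u - l - ΔQ) / b = 0 := Real.exp_injective (by rw [this, Real.exp_zero])
      have : -(u - l - ΔQ) = 0 := by
        field_simp at harg
        linarith
      linarith
    · intro h
      have : -(u - l - ΔQ) / b = 0 := by rw [h]; ring
      have : C l u b (l + ΔQ) - C l u b l = 0 := by
        rw [key, this, Real.exp_zero]; ring
      linarith
end

section
/- With α = e^ε/(1−δ) > 1 and β = (u−l)/ΔQ ≥ 1, one has ΔC(b₀) = (2α − 1 − α^{2−β})/(α − α^{1−β}), where b₀ = ΔQ/(ε − log(1−δ)). -/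
open Real

theorem deltaC_at_b0 (l u ΔQ ε δ : ℝ) (hlu : l < u)
    (hΔQ : 0 < ΔQ) (hΔQu : ΔQ ≤ u - l) (hε : 0 ≤ ε) (hδ0 : 0 ≤ δ) (hδ1 : δ < 1)
    (hne : ¬(ε = 0 ∧ δ = 0)) :
    C l u (ΔQ / (ε - Real.log (1 - δ))) (l + ΔQ) /
        C l u (ΔQ / (ε - Real.log (1 - δ))) l
      = (2 * (Real.exp ε / (1 - δ)) - 1
            - (Real.exp ε / (1 - δ)) ^ (2 - (u - l) / ΔQ)) /
        ((Real.exp ε / (1 - δ)) - (Real.exp ε / (1 - δ)) ^ (1 - (u - l) / ΔQ)) := by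
  have h1δ : (0:ℝ) < 1 - δ := by linarith
  set L := ε - Real.log (1 - δ) with hLdef
  have hL : 0 < L := by
    rcases lt_or_eq_of_le hε with h | h
    · have : Real.log (1 - δ) ≤ 0 := Real.log_nonpos (by linarith) (by linarith)
      simp only [hLdef]; linarith
    · have hδ : δ ≠ 0 := fun hd => hne ⟨h.symm, hd⟩
      have hδpos : 0 < δ := lt_of_le_of_ne hδ0 (Ne.symm hδ)
      have : Real.log (1 - δ) < 0 := Real.log_neg h1δ (by linarith)
      simp only [hLdef]; linarith
  have hα : Real.exp ε / (1 - δ) = Real.exp L := by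
    rw [hLdef, Real.exp_sub, Real.exp_log h1δ]
  set β := (u - l) / ΔQ with hβdef
  have hβ : 0 < β := div_pos (by linarith) hΔQ
  rw [hα]
  have e1 : -(l + ΔQ - l) / (ΔQ / L) = L * (-1) := by field_simp; ring
  have e2 : -(u - (l + ΔQ)) / (ΔQ / L) = L * (1 - β) := by
    rw [hβdef]; field_simp; ring
  have e3 : -(l - l) / (ΔQ / L) = L * 0 := by simp
  have e4 : -(u - l) / (ΔQ / L) = L * (-β) := by
    rw [hβdef]; field_simp
  rw [C, C, e1, e2, e3, e4, ← Real.exp_mul, ← Real.exp_mul]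
  set A := Real.exp L with hAdef
  set B := Real.exp (L * β) with hBdef
  have hA1 : 1 < A := by
    rw [hAdef, ← Real.exp_zero]; exact Real.exp_lt_exp.mpr hL
  have hB1 : 1 < B := by
    rw [hBdef, ← Real.exp_zero]; exact Real.exp_lt_exp.mpr (mul_pos hL hβ)
  have hA0 : 0 < A := by linarith
  have hB0 : 0 < B := by linarith
  have f1 : Real.exp (L * (-1)) = A⁻¹ := by
    rw [show L * (-1) = -L by ring, Real.exp_neg, ← hAdef]
  have f2 : Real.exp (L * (1 - β)) = A / B := by
    rw [show L * (1 - β) = L - L * β by ring, Real.exp_sub, ← hAdef, ← hBdef]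
  have f3 : Real.exp (L * 0) = 1 := by simp
  have f4 : Real.exp (L * (-β)) = B⁻¹ := by
    rw [show L * (-β) = -(L * β) by ring, Real.exp_neg, ← hBdef]
  have f5 : Real.exp (L * (2 - β)) = A * A / B := by
    rw [show L * (2 - β) = L * (1 - β) + L by ring, Real.exp_add, f2, ← hAdef]
    ring
  rw [f1, f2, f3, f4, f5]
  have d1 : 1 - 1 / 2 * (1 + B⁻¹) ≠ 0 := by
    have : B⁻¹ < 1 := inv_lt_one_of_one_lt₀ hB1
    intro h; nlinarith
  have d2 : A - A / B ≠ 0 := by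
    have : A / B < A := by
      rw [div_lt_iff₀ hB0]; nlinarith
    intro h; linarith
  rw [div_eq_div_iff d1 d2]
  field_simp
  ring
end

section
/- For all real α > 1 and β ≥ 1, one has 1 ≤ (2α − 1 − α^{2−β})/(α − α^{1−β}) < α, with the left inequality an equality if and only if β = 1. -/
open Real

theorem alpha_beta_ineq (α β : ℝ) (hα : 1 < α) (hβ : 1 ≤ β) :
    1 ≤ (2 * α - 1 - α ^ (2 - β)) / (α - α ^ (1 - β)) ∧
    (2 * α - 1 - α ^ (2 - β)) / (α - α ^ (1 - β)) < α ∧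
    ((2 * α - 1 - α ^ (2 - β)) / (α - α ^ (1 - β)) = 1 ↔ β = 1) := by
  have hα0 : (0:ℝ) < α := lt_trans one_pos hα
  have hx0 : 0 < α ^ (1 - β) := Real.rpow_pos_of_pos hα0 _
  have hx1 : α ^ (1 - β) ≤ 1 :=
    Real.rpow_le_one_of_one_le_of_nonpos hα.le (by linarith)
  have h2 : α ^ (2 - β) = α * α ^ (1 - β) := by
    rw [show (2:ℝ) - β = 1 + (1 - β) by ring, Real.rpow_add hα0, Real.rpow_one]
  set x := α ^ (1 - β) with hx
  have hd : 0 < α - x := by linarith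
  refine ⟨?_, ?_, ?_⟩
  · rw [le_div_iff₀ hd, h2]; nlinarith
  · rw [div_lt_iff₀ hd, h2]; nlinarith
  · constructor
    · intro h
      by_contra hb
      have hβ' : 1 < β := lt_of_le_of_ne hβ (Ne.symm hb)
      have hxlt : x < 1 := Real.rpow_lt_one_of_one_lt_of_neg hα (by linarith)
      rw [div_eq_one_iff_eq (ne_of_gt hd), h2] at h
      nlinarith
    · intro h
      subst h
      have : x = 1 := by rw [hx]; norm_num
      rw [div_eq_one_iff_eq (ne_of_gt hd), h2, this]
      ring
end

section
/- f(b₀) ≥ b₀, with equality if and only if ΔQ = u − l, where b₀ = ΔQ/(ε − log(1−δ)) and f(b) = ΔQ/(ε − log ΔC(b) − log(1−δ)). -/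
open Real

/-- `ΔC(b) = C_{l+ΔQ}(b) / C_l(b)`. -/
noncomputable def deltaC (l u ΔQ b : ℝ) : ℝ := C l u b (l + ΔQ) / C l u b l

/-- The fixed point operator `f`. -/
noncomputable def fFix (l u ΔQ ε δ b : ℝ) : ℝ :=
  ΔQ / (ε - Real.log (deltaC l u ΔQ b) - Real.log (1 - δ))

theorem f_b0_ge_b0 (l u ΔQ ε δ : ℝ) (hlu : l < u)
    (hΔQ : 0 < ΔQ) (hΔQu : ΔQ ≤ u - l) (hε : 0 ≤ ε) (hδ0 : 0 ≤ δ) (hδ1 : δ < 1)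
    (hne : ¬(ε = 0 ∧ δ = 0)) :
    ΔQ / (ε - Real.log (1 - δ)) ≤
        fFix l u ΔQ ε δ (ΔQ / (ε - Real.log (1 - δ))) ∧
    (fFix l u ΔQ ε δ (ΔQ / (ε - Real.log (1 - δ))) = ΔQ / (ε - Real.log (1 - δ))
        ↔ ΔQ = u - l) := by
  have h1δ : (0:ℝ) < 1 - δ := by linarith
  have hlog1δ : Real.log (1 - δ) ≤ 0 := Real.log_nonpos (by linarith) (by linarith)
  have hS : 0 < ε - Real.log (1 - δ) := by
    rcases lt_or_eq_of_le hε with h | h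
    · linarith
    · have hδ : 0 < δ := by
        rcases lt_or_eq_of_le hδ0 with h' | h'
        · exact h'
        · exact absurd ⟨h.symm, h'.symm⟩ hne
      have : Real.log (1 - δ) < 0 := Real.log_neg h1δ (by linarith)
      linarith
  set S := ε - Real.log (1 - δ) with hSdef
  set b := ΔQ / S with hbdef
  have hb : 0 < b := div_pos hΔQ hS
  have hΔQbS : ΔQ / b = S := by
    rw [hbdef]; field_simp
  set A := Real.exp (-ΔQ / b) with hAdef
  set Cc := Real.exp (-(u - l - ΔQ) / b) with hCcdef
  have hA0 : 0 < A := Real.exp_pos _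
  have hC0 : 0 < Cc := Real.exp_pos _
  have hA1 : A < 1 := by
    rw [hAdef]
    apply Real.exp_lt_one_iff.mpr
    have : 0 < ΔQ / b := div_pos hΔQ hb
    rw [neg_div]; linarith [this]
  have hC1 : Cc ≤ 1 := by
    rw [hCcdef]
    apply Real.exp_le_one_iff.mpr
    have : 0 ≤ (u - l - ΔQ) / b := div_nonneg (by linarith) hb.le
    rw [neg_div]; linarith [this]
  have hCl : C l u b l = (1 - A * Cc) / 2 := by
    unfold C
    rw [show -(l - l) / b = (0:ℝ) by ring, Real.exp_zero,
      show -(u - l) / b = -ΔQ / b + -(u - l - ΔQ) / b by ring, Real.exp_add]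
    rw [← hAdef, ← hCcdef]; ring
  have hCq : C l u b (l + ΔQ) = 1 - (A + Cc) / 2 := by
    unfold C
    rw [show -(l + ΔQ - l) / b = -ΔQ / b by ring,
      show -(u - (l + ΔQ)) / b = -(u - l - ΔQ) / b by ring]
    rw [← hAdef, ← hCcdef]; ring
  have hClpos : 0 < C l u b l := by
    rw [hCl]
    nlinarith [mul_pos hA0 hC0]
  have hdiff : C l u b (l + ΔQ) - C l u b l = (1 - A) * (1 - Cc) / 2 := by
    rw [hCl, hCq]; ring
  have hΔCge1 : 1 ≤ deltaC l u ΔQ b := by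
    rw [deltaC, le_div_iff₀ hClpos, one_mul]
    nlinarith [mul_nonneg (by linarith : (0:ℝ) ≤ 1 - A) (by linarith : (0:ℝ) ≤ 1 - Cc)]
  have hΔCpos : 0 < deltaC l u ΔQ b := lt_of_lt_of_le one_pos hΔCge1
  have hAinv : A * Real.exp (ΔQ / b) = 1 := by
    rw [hAdef, ← Real.exp_add, show -ΔQ / b + ΔQ / b = 0 by ring, Real.exp_zero]
  have hkey : A * C l u b (l + ΔQ) < C l u b l := by
    rw [hCl, hCq]
    nlinarith [sq_nonneg (1 - A), mul_pos hA0 hC0]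
  have hΔClt : deltaC l u ΔQ b < Real.exp (ΔQ / b) := by
    rw [deltaC, div_lt_iff₀ hClpos]
    have hE : 0 < Real.exp (ΔQ / b) := Real.exp_pos _
    calc C l u b (l + ΔQ) = Real.exp (ΔQ / b) * (A * C l u b (l + ΔQ)) := by
          rw [show Real.exp (ΔQ / b) * (A * C l u b (l + ΔQ))
              = (A * Real.exp (ΔQ / b)) * C l u b (l + ΔQ) by ring, hAinv, one_mul]
      _ < Real.exp (ΔQ / b) * C l u b l := by
          exact mul_lt_mul_of_pos_left hkey hE
  have hlogge : 0 ≤ Real.log (deltaC l u ΔQ b) := Real.log_nonneg hΔCge1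
  have hloglt : Real.log (deltaC l u ΔQ b) < S := by
    have := Real.log_lt_log hΔCpos hΔClt
    rwa [Real.log_exp, hΔQbS] at this
  have hD : 0 < ε - Real.log (deltaC l u ΔQ b) - Real.log (1 - δ) := by
    have : ε - Real.log (1 - δ) = S := rfl
    linarith
  have hffix : fFix l u ΔQ ε δ b = ΔQ / (ε - Real.log (deltaC l u ΔQ b) - Real.log (1 - δ)) := rfl
  constructor
  · rw [hffix]
    apply div_le_div_of_nonneg_left hΔQ.le hD
    linarith
  · rw [hffix]
    constructor
    · intro h
      have hSne : S ≠ 0 := ne_of_gt hS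
      have hDne : (ε - Real.log (deltaC l u ΔQ b) - Real.log (1 - δ)) ≠ 0 := ne_of_gt hD
      have hDeq : ε - Real.log (deltaC l u ΔQ b) - Real.log (1 - δ) = S := by
        rw [div_eq_div_iff hD.ne' hS.ne'] at h
        exact (mul_left_cancel₀ (ne_of_gt hΔQ) (by linarith)).symm
      have hlog0 : Real.log (deltaC l u ΔQ b) = 0 := by
        have : ε - Real.log (1 - δ) = S := rfl
        linarith
      have hΔC1 : deltaC l u ΔQ b = 1 := by
        rcases Real.log_eq_zero.mp hlog0 with h | h | h
        · exact absurd h (ne_of_gt hΔCpos)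
        · exact h
        · linarith [hΔCpos, h]
      have hCeq : C l u b (l + ΔQ) = C l u b l := by
        rw [deltaC, div_eq_one_iff_eq (ne_of_gt hClpos)] at hΔC1
        exact hΔC1
      have h0 : (1 - A) * (1 - Cc) = 0 := by
        have := hdiff
        rw [hCeq] at this
        linarith
      have hCc1 : Cc = 1 := by
        rcases mul_eq_zero.mp h0 with h' | h'
        · linarith
        · linarith
      have : -(u - l - ΔQ) / b = 0 := by
        have h1 : Real.exp (-(u - l - ΔQ) / b) = Real.exp 0 := by
          rw [Real.exp_zero, ← hCcdef, hCc1]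
        exact Real.exp_injective h1
      have hb' : b ≠ 0 := ne_of_gt hb
      have : u - l - ΔQ = 0 := by
        field_simp at this
        linarith
      linarith
    · intro h
      have hCc1 : Cc = 1 := by
        rw [hCcdef, show -(u - l - ΔQ) / b = 0 / b by rw [h]; ring]
        simp
      have hCeq : C l u b (l + ΔQ) = C l u b l := by
        have := hdiff
        rw [hCc1] at this
        linarith
      have hΔC1 : deltaC l u ΔQ b = 1 := by
        rw [deltaC, hCeq, div_self (ne_of_gt hClpos)]
      rw [hΔC1, Real.log_one, hbdef, hSdef]
      ring_nf
end

section
/- For all b ≠ 0, the derivative of ΔC with respect to b satisfies dΔC/db ≤ 0, with equality if and only if ΔQ = u − l; i.e., ΔC(b) is nonincreasing in b on (0,∞). -/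
open Real

private lemma hd_exp (x b : ℝ) (hb : b ≠ 0) :
    HasDerivAt (fun t : ℝ => Real.exp (-x / t)) (Real.exp (-x / b) * (x / b ^ 2)) b := by
  have h1 : HasDerivAt (fun t : ℝ => -x / t) (x / b ^ 2) b := by
    have h := (hasDerivAt_inv hb).const_mul (-x)
    have heq : -x * -(b ^ 2)⁻¹ = x / b ^ 2 := by field_simp
    simpa [div_eq_mul_inv, heq] using h
  exact h1.exp

private lemma hd_C (l u q b : ℝ) (hb : b ≠ 0) :
    HasDerivAt (fun t : ℝ => C l u t q)
      (-((1 / 2) * (Real.exp (-(q - l) / b) * ((q - l) / b ^ 2) +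
        Real.exp (-(u - q) / b) * ((u - q) / b ^ 2)))) b := by
  have h := (((hd_exp (q - l) b hb).add (hd_exp (u - q) b hb)).const_mul (1 / 2)).const_sub 1
  simpa [C, mul_add] using h

theorem deriv_deltaC_nonpos (l u ΔQ : ℝ) (hlu : l < u)
    (hΔQ : 0 < ΔQ) (hΔQu : ΔQ ≤ u - l) (b : ℝ) (hb : b ≠ 0) :
    deriv (deltaC l u ΔQ) b ≤ 0 ∧
    (deriv (deltaC l u ΔQ) b = 0 ↔ ΔQ = u - l) := by
  have hb2 : (0:ℝ) < b ^ 2 := by positivity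
  obtain ⟨x, hxdef⟩ : ∃ x, x = Real.exp (-ΔQ / b) := ⟨_, rfl⟩
  obtain ⟨y, hydef⟩ : ∃ y, y = Real.exp (-(u - l - ΔQ) / b) := ⟨_, rfl⟩
  have hx0 : 0 < x := hxdef ▸ Real.exp_pos _
  have hy0 : 0 < y := hydef ▸ Real.exp_pos _
  have hxy : Real.exp (-(u - l) / b) = x * y := by
    rw [hxdef, hydef, ← Real.exp_add]
    congr 1; ring
  have hz1 : x * y ≠ 1 := by
    rw [← hxy, Ne, Real.exp_eq_one_iff, div_eq_zero_iff]
    push_neg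
    exact ⟨by intro h; nlinarith, hb⟩
  have hMval : C l u b l = 1 - (1 / 2) * (1 + x * y) := by
    rw [C, show -(l - l) / b = 0 by simp, Real.exp_zero, hxy]
  have hM0 : C l u b l ≠ 0 := by
    rw [hMval]
    intro h
    apply hz1
    linarith
  have hNval : C l u b (l + ΔQ) = 1 - (1 / 2) * (x + y) := by
    rw [C, show -(l + ΔQ - l) / b = -ΔQ / b by ring,
      show -(u - (l + ΔQ)) / b = -(u - l - ΔQ) / b by ring, ← hxdef, ← hydef]
  have hd : deriv (deltaC l u ΔQ) b =
      ((-((1 / 2) * (Real.exp (-(l + ΔQ - l) / b) * ((l + ΔQ - l) / b ^ 2) +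
          Real.exp (-(u - (l + ΔQ)) / b) * ((u - (l + ΔQ)) / b ^ 2)))) * C l u b l -
        C l u b (l + ΔQ) *
        (-((1 / 2) * (Real.exp (-(l - l) / b) * ((l - l) / b ^ 2) +
          Real.exp (-(u - l) / b) * ((u - l) / b ^ 2))))) / (C l u b l) ^ 2 := by
    exact ((hd_C l u (l + ΔQ) b hb).div (hd_C l u l b hb) hM0).deriv
  have hkey : deriv (deltaC l u ΔQ) b =
      (-(ΔQ * x * (1 - y) ^ 2 + (u - l - ΔQ) * y * (1 - x) ^ 2) / (4 * b ^ 2)) /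
        (C l u b l) ^ 2 := by
    rw [hd, hNval, hMval]
    congr 1
    rw [show -(l + ΔQ - l) / b = -ΔQ / b by ring,
      show -(u - (l + ΔQ)) / b = -(u - l - ΔQ) / b by ring,
      show -(l - l) / b = 0 by simp, Real.exp_zero, hxy, ← hxdef, ← hydef,
      show l + ΔQ - l = ΔQ by ring, show u - (l + ΔQ) = u - l - ΔQ by ring,
      show l - l = 0 by ring]
    field_simp
    ring
  have hM2 : (0:ℝ) < (C l u b l) ^ 2 := by positivity
  have hc0 : 0 ≤ u - l - ΔQ := by linarith
  constructor
  · rw [hkey]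
    apply div_nonpos_of_nonpos_of_nonneg _ (le_of_lt hM2)
    apply div_nonpos_of_nonpos_of_nonneg _ (by positivity)
    have h1 : 0 ≤ ΔQ * x * (1 - y) ^ 2 := by positivity
    have h2 : 0 ≤ (u - l - ΔQ) * y * (1 - x) ^ 2 := by positivity
    linarith
  · rw [hkey, div_eq_zero_iff, div_eq_zero_iff]
    constructor
    · rintro ((h | h) | h)
      · have h1 : 0 ≤ (u - l - ΔQ) * y * (1 - x) ^ 2 := by positivity
        have h2 : ΔQ * x * (1 - y) ^ 2 = 0 := by
          have h3 : 0 ≤ ΔQ * x * (1 - y) ^ 2 := by positivity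
          linarith
        have hy1 : y = 1 := by
          have h4 : (1 - y) ^ 2 = 0 := by
            rcases mul_eq_zero.1 h2 with h' | h'
            · exact absurd h' (by positivity)
            · exact h'
          have := pow_eq_zero_iff (n := 2) (by norm_num) |>.1 h4
          linarith
        have h5 : -(u - l - ΔQ) / b = 0 := (Real.exp_eq_one_iff _).1 (hydef ▸ hy1)
        rcases div_eq_zero_iff.1 h5 with h' | h'
        · have := neg_eq_zero.1 h'; linarith
        · exact absurd h' hb
      · exact absurd h (by positivity)
      · exact absurd h (ne_of_gt hM2)
    · intro h
      left; left
      have hy1 : y = 1 := by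
        rw [hydef, show -(u - l - ΔQ) / b = 0 by rw [show u - l - ΔQ = 0 by linarith]; simp]
        exact Real.exp_zero
      rw [hy1, show u - l - ΔQ = 0 by linarith]
      ring
end

section
/- The derivative of ΔC(b) with respect to b equals −(1/(2b·C_l(b)))²·ΔQ·exp(−ΔQ/b)·(1 − exp(−(u−l−ΔQ)/b))² minus a nonnegative term; more precisely, dΔC/db = −(1/(2b C_l(b)))² · [ΔQ(e^{−ΔQ/b} + e^{−(2(u−l)−ΔQ)/b}) + e^{−(u−l)/b}(u−l−ΔQ)(e^{ΔQ/b} + e^{−ΔQ/b}) − 2(u−l)e^{−(u−l)/b}]. -/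
open Real

lemma hasDerivAt_exp_neg_div (a : ℝ) {b : ℝ} (hb : b ≠ 0) :
    HasDerivAt (fun x => exp (-a / x)) (a / b ^ 2 * exp (-a / b)) b := by
  have h := ((hasDerivAt_inv hb).const_mul (-a)).exp
  simp only [← div_eq_mul_inv] at h
  convert h using 1
  field_simp

lemma hasDerivAt_C (l u q : ℝ) {b : ℝ} (hb : b ≠ 0) :
    HasDerivAt (fun x => C l u x q)
      (-(1 / 2) * ((q - l) / b ^ 2 * exp (-(q - l) / b) + (u - q) / b ^ 2 * exp (-(u - q) / b)))
      b :=
  (((hasDerivAt_exp_neg_div (q - l) hb).add (hasDerivAt_exp_neg_div (u - q) hb)).const_mul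
    (1 / 2 : ℝ)).const_sub 1 |>.congr_deriv (by ring)

lemma C_left (l u b : ℝ) : C l u b l = (1 - exp (-(u - l) / b)) / 2 := by
  simp only [C, sub_self, neg_zero, zero_div, exp_zero]
  ring

lemma C_left_pos {l u b : ℝ} (hlu : l < u) (hb : 0 < b) : 0 < C l u b l := by
  have : exp (-(u - l) / b) < 1 := exp_lt_one_iff.mpr (div_neg_of_neg_of_pos (by linarith) hb)
  rw [C_left]
  linarith

theorem deriv_deltaC_eq_general (l u ΔQ b : ℝ) (hlu : l < u)
    (hb : 0 < b) :
    deriv (deltaC l u ΔQ) b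
      = -(1 / (2 * b * C l u b l)) ^ 2 *
        (ΔQ * (Real.exp (-ΔQ / b) + Real.exp (-(2 * (u - l) - ΔQ) / b))
          + Real.exp (-(u - l) / b) * (u - l - ΔQ) *
              (Real.exp (ΔQ / b) + Real.exp (-ΔQ / b))
          - 2 * (u - l) * Real.exp (-(u - l) / b)) := by
  have hC := (C_left_pos hlu hb).ne'
  have hquot : HasDerivAt (deltaC l u ΔQ) _ b :=
    (hasDerivAt_C l u (l + ΔQ) hb.ne').div (hasDerivAt_C l u l hb.ne') hC
  rw [hquot.deriv, add_sub_cancel_left, sub_add_eq_sub_sub, sub_self, zero_div, zero_mul, zero_add]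
  -- every exponential is a monomial in `x` and `y`, so what remains is a rational identity
  set x := exp (-ΔQ / b)
  set y := exp (-(u - l - ΔQ) / b)
  have hxy : exp (-(u - l) / b) = x * y := by rw [← exp_add]; ring_nf
  have hxyy : exp (-(2 * (u - l) - ΔQ) / b) = x * y ^ 2 := by
    rw [sq, ← exp_add, ← exp_add]; ring_nf
  have hxinv : exp (ΔQ / b) = x⁻¹ := by rw [← exp_neg]; ring_nf
  have hnum : C l u b (l + ΔQ) = 1 - (x + y) / 2 := by
    rw [C, add_sub_cancel_left, sub_add_eq_sub_sub]; ring
  have hx : x ≠ 0 := (exp_pos _).ne'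
  rw [C_left, hxy] at hC ⊢
  rw [hnum, hxyy, hxinv]
  field_simp
  ring

theorem deriv_deltaC_eq (l u ΔQ b : ℝ) (hlu : l < u)
    (hΔQ : 0 < ΔQ) (hΔQu : ΔQ ≤ u - l) (hb : 0 < b) :
    deriv (deltaC l u ΔQ) b
      = -(1 / (2 * b * C l u b l)) ^ 2 *
        (ΔQ * (Real.exp (-ΔQ / b) + Real.exp (-(2 * (u - l) - ΔQ) / b))
          + Real.exp (-(u - l) / b) * (u - l - ΔQ) *
              (Real.exp (ΔQ / b) + Real.exp (-ΔQ / b))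
          - 2 * (u - l) * Real.exp (-(u - l) / b)) :=
  deriv_deltaC_eq_general l u ΔQ b hlu hb
end

section
/- There exists a unique b* ∈ [b₀, f(b₀)] with f(b*) = b*, and b* = b₀ = f(b₀) if and only if ΔQ = u − l. -/
open Real

/-!
Put `K = ε - log (1 - δ)`, so `b₀ = ΔQ / K`. In the coordinates `x = exp (-ΔQ/b)`,
`y = exp (-(u-l-ΔQ)/b)` one has `ΔC(b) = (2 - x - y) / (1 - x y) = 1 + (1 - x)(1 - y) / (1 - x y)`
for `b > 0`. This lies in `[1, 1/x) = [1, exp (ΔQ/b))`, equals `1` exactly when `y = 1`, and is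
antitone in `x` and in `y`, hence in `b`. So on `[b₀, ∞)` the denominator `K - log ΔC(b)` of `f` is
positive (as `log ΔC(b) < ΔQ/b ≤ K`) and nondecreasing: `f` is continuous and antitone there, and
`b₀ ≤ f b₀`. A continuous antitone `f` has exactly one fixed point in `[a, f a]`: `f x - x` changes
sign there, and fixed points `x ≤ y` give `y = f y ≤ f x = x`. Finally `f b₀ = b₀` iff
`ΔC(b₀) = 1` iff `ΔQ = u - l`, and then `[b₀, f b₀]` is a single point.
-/

open Set

theorem existsUnique_fixedPoint_of_antitoneOn {f : ℝ → ℝ} {a : ℝ} (ha : a ≤ f a)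
    (hcont : ContinuousOn f (Icc a (f a))) (hanti : AntitoneOn f (Icc a (f a))) :
    ∃! x, x ∈ Icc a (f a) ∧ f x = x := by
  have ha_mem : a ∈ Icc a (f a) := left_mem_Icc.2 ha
  have hfa_mem : f a ∈ Icc a (f a) := right_mem_Icc.2 ha
  have hzero : (0 : ℝ) ∈ Icc (f (f a) - f a) (f a - a) :=
    ⟨sub_nonpos.2 (hanti ha_mem hfa_mem ha), sub_nonneg.2 ha⟩
  obtain ⟨x, hx, hx₀⟩ := intermediate_value_Icc' ha (hcont.sub continuousOn_id) hzero
  have hfx : f x = x := sub_eq_zero.1 hx₀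
  refine ⟨x, ⟨hx, hfx⟩, fun y ⟨hy, hfy⟩ => ?_⟩
  rcases le_total x y with hxy | hyx
  · exact le_antisymm (by simpa [hfx, hfy] using hanti hx hy hxy) hxy
  · exact le_antisymm hyx (by simpa [hfx, hfy] using hanti hy hx hyx)

noncomputable def laplaceRatio (x y : ℝ) : ℝ := (2 - x - y) / (1 - x * y)

theorem laplaceRatio_comm (x y : ℝ) : laplaceRatio x y = laplaceRatio y x := by
  simp only [laplaceRatio]; ring

theorem laplaceRatio_sub_one {x y : ℝ} (h : 1 - x * y ≠ 0) :
    laplaceRatio x y - 1 = (1 - x) * (1 - y) / (1 - x * y) := by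
  rw [laplaceRatio, div_sub_one h]; ring_nf

section UnitSquare

variable {x y : ℝ} (hx0 : 0 ≤ x) (hx1 : x < 1) (hy1 : y ≤ 1)
include hx0 hx1 hy1

theorem one_le_laplaceRatio : 1 ≤ laplaceRatio x y := by
  have hd := sub_pos.2 (mul_lt_one_of_nonneg_of_lt_one_left hx0 hx1 hy1)
  have := laplaceRatio_sub_one hd.ne'
  have : 0 ≤ (1 - x) * (1 - y) / (1 - x * y) :=
    div_nonneg (mul_nonneg (by linarith) (by linarith)) hd.le
  linarith

theorem laplaceRatio_eq_one_iff : laplaceRatio x y = 1 ↔ y = 1 := by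
  have hd := sub_pos.2 (mul_lt_one_of_nonneg_of_lt_one_left hx0 hx1 hy1)
  rw [← sub_eq_zero, laplaceRatio_sub_one hd.ne', div_eq_zero_iff, or_iff_left hd.ne',
    mul_eq_zero, or_iff_right (sub_ne_zero.2 hx1.ne'), sub_eq_zero, eq_comm]

theorem mul_laplaceRatio_lt_one : x * laplaceRatio x y < 1 := by
  have hd := sub_pos.2 (mul_lt_one_of_nonneg_of_lt_one_left hx0 hx1 hy1)
  rw [laplaceRatio, mul_div_assoc', div_lt_one hd]
  nlinarith [sq_pos_of_pos (sub_pos.2 hx1)]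

end UnitSquare

theorem laplaceRatio_le_laplaceRatio_left {x x' y : ℝ} (hxx : x ≤ x') (hy : 0 ≤ y)
    (h : x' * y < 1) : laplaceRatio x' y ≤ laplaceRatio x y := by
  have hd : 0 < 1 - x * y := by nlinarith
  have hd' : 0 < 1 - x' * y := by linarith
  have key : laplaceRatio x y - laplaceRatio x' y
      = (x' - x) * (1 - y) ^ 2 / ((1 - x * y) * (1 - x' * y)) := by
    rw [laplaceRatio, laplaceRatio, div_sub_div _ _ hd.ne' hd'.ne']; ring
  have : 0 ≤ (x' - x) * (1 - y) ^ 2 / ((1 - x * y) * (1 - x' * y)) :=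
    div_nonneg (mul_nonneg (sub_nonneg.2 hxx) (sq_nonneg _)) (mul_pos hd hd').le
  linarith

theorem laplaceRatio_le_laplaceRatio {x x' y y' : ℝ} (hxx : x ≤ x') (hyy : y ≤ y') (hx : 0 ≤ x)
    (hy' : 0 ≤ y') (h : x' * y' < 1) : laplaceRatio x' y' ≤ laplaceRatio x y := calc
  laplaceRatio x' y' ≤ laplaceRatio x y' := laplaceRatio_le_laplaceRatio_left hxx hy' h
  _ = laplaceRatio y' x := laplaceRatio_comm _ _
  _ ≤ laplaceRatio y x := laplaceRatio_le_laplaceRatio_left hyy hx (by nlinarith)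
  _ = laplaceRatio x y := laplaceRatio_comm _ _

theorem deltaC_eq_laplaceRatio (l u ΔQ b : ℝ) :
    deltaC l u ΔQ b = laplaceRatio (exp (-(ΔQ / b))) (exp (-((u - l - ΔQ) / b))) := by
  set x := exp (-(ΔQ / b))
  set y := exp (-((u - l - ΔQ) / b))
  have hxy : exp (-(u - l) / b) = x * y := by
    rw [← exp_add]; ring_nf
  rw [deltaC, C, C, laplaceRatio, sub_self, neg_zero, zero_div, exp_zero, hxy,
    show -(l + ΔQ - l) / b = -(ΔQ / b) by ring,
    show -(u - (l + ΔQ)) / b = -((u - l - ΔQ) / b) by ring,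
    show 1 - 1 / 2 * (x + y) = 1 / 2 * (2 - x - y) by ring,
    show 1 - 1 / 2 * (1 + x * y) = 1 / 2 * (1 - x * y) by ring]
  exact mul_div_mul_left _ _ (by norm_num)

theorem exp_neg_div_lt_one {a b : ℝ} (ha : 0 < a) (hb : 0 < b) : exp (-(a / b)) < 1 :=
  exp_lt_one_iff.2 (neg_neg_of_pos (div_pos ha hb))

theorem exp_neg_div_le_one {a b : ℝ} (ha : 0 ≤ a) (hb : 0 ≤ b) : exp (-(a / b)) ≤ 1 :=
  exp_le_one_iff.2 (neg_nonpos_of_nonneg (div_nonneg ha hb))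

theorem exp_neg_div_le_exp_neg_div {a b b' : ℝ} (ha : 0 ≤ a) (hb : 0 < b) (hbb' : b ≤ b') :
    exp (-(a / b)) ≤ exp (-(a / b')) :=
  exp_le_exp.2 (neg_le_neg (div_le_div_of_nonneg_left ha hb hbb'))

section deltaC

variable {l u ΔQ : ℝ} (hΔQ : 0 < ΔQ) (hΔQu : ΔQ ≤ u - l)
include hΔQ hΔQu

theorem one_le_deltaC {b : ℝ} (hb : 0 < b) : 1 ≤ deltaC l u ΔQ b := by
  rw [deltaC_eq_laplaceRatio]
  exact one_le_laplaceRatio (exp_pos _).le (exp_neg_div_lt_one hΔQ hb)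
    (exp_neg_div_le_one (by linarith) hb.le)

theorem deltaC_eq_one_iff {b : ℝ} (hb : 0 < b) : deltaC l u ΔQ b = 1 ↔ ΔQ = u - l := by
  rw [deltaC_eq_laplaceRatio, laplaceRatio_eq_one_iff (exp_pos _).le (exp_neg_div_lt_one hΔQ hb)
    (exp_neg_div_le_one (by linarith) hb.le), exp_eq_one_iff, neg_eq_zero, div_eq_zero_iff,
    or_iff_left hb.ne', sub_eq_zero, eq_comm]

theorem log_deltaC_lt {b : ℝ} (hb : 0 < b) : log (deltaC l u ΔQ b) < ΔQ / b := by
  have hx := exp_neg_div_lt_one hΔQ hb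
  have hlt := mul_laplaceRatio_lt_one (exp_pos _).le hx
    (exp_neg_div_le_one (a := u - l - ΔQ) (by linarith) hb.le)
  rw [log_lt_iff_lt_exp (zero_lt_one.trans_le (one_le_deltaC hΔQ hΔQu hb)),
    deltaC_eq_laplaceRatio]
  calc _ < 1 / exp (-(ΔQ / b)) := (lt_div_iff₀' (exp_pos _)).2 hlt
    _ = exp (ΔQ / b) := by rw [one_div, ← exp_neg, neg_neg]

theorem antitoneOn_deltaC : AntitoneOn (deltaC l u ΔQ) (Ioi 0) := by
  intro b hb b' hb' hbb'
  have hq : 0 ≤ u - l - ΔQ := by linarith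
  rw [deltaC_eq_laplaceRatio, deltaC_eq_laplaceRatio]
  exact laplaceRatio_le_laplaceRatio (exp_neg_div_le_exp_neg_div hΔQ.le hb hbb')
    (exp_neg_div_le_exp_neg_div hq hb hbb') (exp_pos _).le (exp_pos _).le
    (mul_lt_one_of_nonneg_of_lt_one_left (exp_pos _).le (exp_neg_div_lt_one hΔQ hb')
      (exp_neg_div_le_one hq (le_of_lt hb')))

theorem continuousOn_deltaC : ContinuousOn (deltaC l u ΔQ) (Ioi 0) := by
  rw [funext (deltaC_eq_laplaceRatio l u ΔQ)]
  refine ContinuousOn.div (by fun_prop (disch := exact fun b hb => (mem_Ioi.1 hb).ne'))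
    (by fun_prop (disch := exact fun b hb => (mem_Ioi.1 hb).ne')) fun b hb => ?_
  exact (sub_pos.2 (mul_lt_one_of_nonneg_of_lt_one_left (exp_pos _).le
    (exp_neg_div_lt_one hΔQ hb) (exp_neg_div_le_one (by linarith) (le_of_lt hb)))).ne'

end deltaC

theorem sub_log_one_sub_pos {ε δ : ℝ} (hε : 0 ≤ ε) (hδ0 : 0 ≤ δ) (hδ1 : δ < 1)
    (hne : ¬(ε = 0 ∧ δ = 0)) : 0 < ε - log (1 - δ) := by
  have hlog : log (1 - δ) ≤ 0 := log_nonpos (by linarith) (by linarith)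
  rcases hε.lt_or_eq with hε | rfl
  · linarith
  · have hδ : 0 < δ := hδ0.lt_of_ne fun h => hne ⟨rfl, h.symm⟩
    linarith [log_neg (by linarith : 0 < 1 - δ) (by linarith)]

theorem fFix_eq_div (l u ΔQ ε δ b : ℝ) :
    fFix l u ΔQ ε δ b = ΔQ / (ε - log (1 - δ) - log (deltaC l u ΔQ b)) := by
  rw [fFix, sub_right_comm]

section fFix

variable {l u ΔQ ε δ : ℝ} (hΔQ : 0 < ΔQ) (hΔQu : ΔQ ≤ u - l) (hK : 0 < ε - log (1 - δ))
include hΔQ hΔQu hK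

theorem log_deltaC_lt_of_le {b : ℝ} (hb : ΔQ / (ε - log (1 - δ)) ≤ b) :
    log (deltaC l u ΔQ b) < ε - log (1 - δ) := by
  have hb₀ : 0 < ΔQ / (ε - log (1 - δ)) := div_pos hΔQ hK
  calc log (deltaC l u ΔQ b) < ΔQ / b := log_deltaC_lt hΔQ hΔQu (hb₀.trans_le hb)
    _ ≤ ΔQ / (ΔQ / (ε - log (1 - δ))) := div_le_div_of_nonneg_left hΔQ.le hb₀ hb
    _ = ε - log (1 - δ) := div_div_cancel₀ hΔQ.ne'

theorem le_fFix : ΔQ / (ε - log (1 - δ)) ≤ fFix l u ΔQ ε δ (ΔQ / (ε - log (1 - δ))) := by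
  rw [fFix_eq_div]
  exact div_le_div_of_nonneg_left hΔQ.le (sub_pos.2 (log_deltaC_lt_of_le hΔQ hΔQu hK le_rfl))
    (sub_le_self _ (log_nonneg (one_le_deltaC hΔQ hΔQu (div_pos hΔQ hK))))

theorem antitoneOn_fFix : AntitoneOn (fFix l u ΔQ ε δ) (Ici (ΔQ / (ε - log (1 - δ)))) := by
  intro b hb b' hb' hbb'
  have hb₀ : 0 < ΔQ / (ε - log (1 - δ)) := div_pos hΔQ hK
  have hle := antitoneOn_deltaC hΔQ hΔQu (hb₀.trans_le hb) (hb₀.trans_le hb') hbb'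
  have hlog := log_le_log (zero_lt_one.trans_le (one_le_deltaC hΔQ hΔQu (hb₀.trans_le hb'))) hle
  rw [fFix_eq_div, fFix_eq_div]
  exact div_le_div_of_nonneg_left hΔQ.le (sub_pos.2 (log_deltaC_lt_of_le hΔQ hΔQu hK hb))
    (sub_le_sub_left hlog _)

theorem continuousOn_fFix : ContinuousOn (fFix l u ΔQ ε δ) (Ici (ΔQ / (ε - log (1 - δ)))) := by
  have hpos : Ici (ΔQ / (ε - log (1 - δ))) ⊆ Ioi 0 := Ici_subset_Ioi.2 (div_pos hΔQ hK)
  rw [funext (fFix_eq_div l u ΔQ ε δ)]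
  refine continuousOn_const.div (continuousOn_const.sub
    (((continuousOn_deltaC hΔQ hΔQu).mono hpos).log fun b hb => ?_)) fun b hb => ?_
  · exact (zero_lt_one.trans_le (one_le_deltaC hΔQ hΔQu (hpos hb))).ne'
  · exact (sub_pos.2 (log_deltaC_lt_of_le hΔQ hΔQu hK hb)).ne'

theorem fFix_eq_self_iff :
    fFix l u ΔQ ε δ (ΔQ / (ε - log (1 - δ))) = ΔQ / (ε - log (1 - δ)) ↔ ΔQ = u - l := by
  have hb₀ : 0 < ΔQ / (ε - log (1 - δ)) := div_pos hΔQ hK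
  have hD := sub_pos.2 (log_deltaC_lt_of_le hΔQ hΔQu hK le_rfl)
  have hC := zero_lt_one.trans_le (one_le_deltaC hΔQ hΔQu hb₀)
  rw [fFix_eq_div, div_eq_div_iff hD.ne' hK.ne', mul_right_inj' hΔQ.ne', eq_comm, sub_eq_self,
    ← deltaC_eq_one_iff hΔQ hΔQu hb₀]
  exact ⟨fun h => by rw [← exp_log hC, h, exp_zero], fun h => by rw [h, log_one]⟩

end fFix

theorem fixed_point_exists_unique_general (l u ΔQ ε δ : ℝ)
    (hΔQ : 0 < ΔQ) (hΔQu : ΔQ ≤ u - l) (hε : 0 ≤ ε) (hδ0 : 0 ≤ δ) (hδ1 : δ < 1)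
    (hne : ¬(ε = 0 ∧ δ = 0)) :
    (∃! bs : ℝ,
        bs ∈ Set.Icc (ΔQ / (ε - Real.log (1 - δ)))
              (fFix l u ΔQ ε δ (ΔQ / (ε - Real.log (1 - δ)))) ∧
        fFix l u ΔQ ε δ bs = bs) ∧
    (∀ bs : ℝ,
        bs ∈ Set.Icc (ΔQ / (ε - Real.log (1 - δ)))
              (fFix l u ΔQ ε δ (ΔQ / (ε - Real.log (1 - δ)))) →
        fFix l u ΔQ ε δ bs = bs →
        ((bs = ΔQ / (ε - Real.log (1 - δ)) ∧
          bs = fFix l u ΔQ ε δ (ΔQ / (ε - Real.log (1 - δ)))) ↔ ΔQ = u - l)) := by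
  have hK := sub_log_one_sub_pos hε hδ0 hδ1 hne
  have hsub : Icc (ΔQ / (ε - log (1 - δ))) (fFix l u ΔQ ε δ (ΔQ / (ε - log (1 - δ))))
      ⊆ Ici (ΔQ / (ε - log (1 - δ))) := Icc_subset_Ici_self
  refine ⟨existsUnique_fixedPoint_of_antitoneOn (le_fFix hΔQ hΔQu hK)
    ((continuousOn_fFix hΔQ hΔQu hK).mono hsub) ((antitoneOn_fFix hΔQ hΔQu hK).mono hsub),
    fun bs hbs _ => ?_⟩
  rw [← fFix_eq_self_iff hΔQ hΔQu hK]
  constructor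
  · rintro ⟨hbs₀, hbs₁⟩
    exact hbs₁.symm.trans hbs₀
  · intro hfix
    have hbs₀ : bs = ΔQ / (ε - log (1 - δ)) := le_antisymm (hfix ▸ hbs.2) hbs.1
    exact ⟨hbs₀, hbs₀.trans hfix.symm⟩

theorem fixed_point_exists_unique (l u ΔQ ε δ : ℝ) (hlu : l < u)
    (hΔQ : 0 < ΔQ) (hΔQu : ΔQ ≤ u - l) (hε : 0 ≤ ε) (hδ0 : 0 ≤ δ) (hδ1 : δ < 1)
    (hne : ¬(ε = 0 ∧ δ = 0)) :
    (∃! bs : ℝ,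
        bs ∈ Set.Icc (ΔQ / (ε - Real.log (1 - δ)))
              (fFix l u ΔQ ε δ (ΔQ / (ε - Real.log (1 - δ)))) ∧
        fFix l u ΔQ ε δ bs = bs) ∧
    (∀ bs : ℝ,
        bs ∈ Set.Icc (ΔQ / (ε - Real.log (1 - δ)))
              (fFix l u ΔQ ε δ (ΔQ / (ε - Real.log (1 - δ)))) →
        fFix l u ΔQ ε δ bs = bs →
        ((bs = ΔQ / (ε - Real.log (1 - δ)) ∧
          bs = fFix l u ΔQ ε δ (ΔQ / (ε - Real.log (1 - δ)))) ↔ ΔQ = u - l)) :=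
  fixed_point_exists_unique_general l u ΔQ ε δ hΔQ hΔQu hε hδ0 hδ1 hne
end
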